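/- Fix m, n ∈ ℕ and 0 ≤ r ≤ min(m, n). The number of diagonally 2-colored Delannoy paths from (0,0) to (m,n) containing exactly r diagonal steps equals 2^r · C(m+n-r, m) · C(m, r), where C(·,·) denotes the binomial coefficient. Concretely: the number of finite lists of steps, each step being one of R (displacement (1,0)), U (displacement (0,1)), D₁ (displacement (1,1)), or D₂ (displacement (1,1)), whose displacements sum to (m,n) and which contain exactly r steps from {D₁, D₂}, equals 2^r · C(m+n-r, m) · C(m, r). -/

import Mathlib

/-!
Splitting a path according to its first step gives the recurrence
`N(m+1, n+1, r+1) = N(m, n+1, r+1) + N(m+1, n, r+1) + 2 N(m, n, r)` (and its two-term analogue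
for `r = 0`), while on the axes the only paths are `Rᵐ` and `Uⁿ`. Two applications of Pascal's
rule, to `C(m+n+1-r, m+1)` and to `C(m+1, r+1)`, show that `2^r C(m+n-r, m) C(m, r)` obeys the
same recurrence and boundary values.
-/

/-- A step of a diagonally 2-colored Delannoy path: right, up, or a diagonal step in one
of two colors. -/
inductive DStep : Type
  | R : DStep
  | U : DStep
  | D1 : DStep
  | D2 : DStep
deriving DecidableEq

/-- The displacement of a step. -/
def DStep.disp : DStep → ℕ × ℕ
  | .R => (1, 0)
  | .U => (0, 1)
  | .D1 => (1, 1)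
  | .D2 => (1, 1)

/-- Whether a step is a (colored) diagonal step. -/
def DStep.isDiag : DStep → Bool
  | .D1 => true
  | .D2 => true
  | _ => false

namespace DStep

instance : Fintype DStep :=
  ⟨{R, U, D1, D2}, fun s => by cases s <;> simp⟩

theorem sum_univ {M : Type*} [AddCommMonoid M] (f : DStep → M) :
    ∑ s, f s = f R + f U + f D1 + f D2 := by
  simp [Finset.univ, Fintype.elems, add_assoc]

end DStep

theorem List.ncard_eq_sum_ncard_cons {α : Type*} [Fintype α] {A : Set (List α)}
    (hA : A.Finite) (hnil : [] ∉ A) : A.ncard = ∑ a, {t | a :: t ∈ A}.ncard := by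
  have (a : α) : Finite {t | a :: t ∈ A} :=
    (hA.preimage (List.cons_injective.injOn)).to_subtype
  let e : A ≃ Σ a, {t | a :: t ∈ A} :=
    { toFun := fun
        | ⟨a :: t, h⟩ => ⟨a, t, h⟩
        | ⟨[], h⟩ => absurd h hnil
      invFun := fun ⟨a, t, h⟩ => ⟨a :: t, h⟩
      left_inv := by rintro ⟨_ | ⟨a, t⟩, h⟩ <;> first | exact absurd h hnil | rfl
      right_inv := by rintro ⟨a, t, h⟩; rfl }
  rw [← Nat.card_coe_set_eq, Nat.card_congr e, Nat.card_sigma]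
  simp only [Nat.card_coe_set_eq]

open DStep

def delannoyPaths (m n r : ℕ) : Set (List DStep) :=
  {l | (l.map disp).sum = (m, n) ∧ l.countP isDiag = r}

def twoColoredDelannoy (m n r : ℕ) : ℕ :=
  2 ^ r * (m + n - r).choose m * m.choose r

theorem length_le_sum_disp (l : List DStep) :
    l.length ≤ (l.map disp).sum.1 + (l.map disp).sum.2 := by
  induction l with
  | nil => simp
  | cons s t ih => cases s <;> simp [disp] <;> omega

theorem delannoyPaths_finite (m n r : ℕ) : (delannoyPaths m n r).Finite :=
  (List.finite_length_le DStep (m + n)).subset fun l ⟨hl, _⟩ => by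
    simpa [hl] using length_le_sum_disp l

theorem nil_notMem_delannoyPaths {m n r : ℕ} (h : m ≠ 0 ∨ n ≠ 0) :
    [] ∉ delannoyPaths m n r := by
  simp [delannoyPaths, Prod.ext_iff]; omega

theorem ncard_delannoyPaths_eq_sum_cons {m n r : ℕ} (h : m ≠ 0 ∨ n ≠ 0) :
    (delannoyPaths m n r).ncard = ∑ s, {t | s :: t ∈ delannoyPaths m n r}.ncard :=
  List.ncard_eq_sum_ncard_cons (delannoyPaths_finite m n r) (nil_notMem_delannoyPaths h)

theorem delannoyPaths_zero_zero (r : ℕ) : delannoyPaths 0 0 r = {l | l = [] ∧ r = 0} := by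
  ext l
  constructor
  · rintro ⟨hsum, rfl⟩
    have hl : l = [] := List.eq_nil_of_length_eq_zero <| by simpa [hsum] using length_le_sum_disp l
    subst hl
    simp
  · rintro ⟨rfl, rfl⟩
    exact ⟨rfl, rfl⟩

theorem ncard_delannoyPaths_zero_zero (r : ℕ) :
    (delannoyPaths 0 0 r).ncard = if r = 0 then 1 else 0 := by
  split_ifs with hr <;> simp [delannoyPaths_zero_zero, hr]

section Recurrences

variable (m n r : ℕ)

theorem ncard_delannoyPaths_succ_zero :
    (delannoyPaths (m + 1) 0 r).ncard = (delannoyPaths m 0 r).ncard := by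
  rw [ncard_delannoyPaths_eq_sum_cons (by simp), sum_univ]
  simp [delannoyPaths, disp, isDiag, Prod.ext_iff, List.countP_cons, add_comm 1]

theorem ncard_delannoyPaths_zero_succ :
    (delannoyPaths 0 (n + 1) r).ncard = (delannoyPaths 0 n r).ncard := by
  rw [ncard_delannoyPaths_eq_sum_cons (by simp), sum_univ]
  simp [delannoyPaths, disp, isDiag, Prod.ext_iff, List.countP_cons, add_comm 1]

theorem ncard_delannoyPaths_succ_succ_zero :
    (delannoyPaths (m + 1) (n + 1) 0).ncard =
      (delannoyPaths m (n + 1) 0).ncard + (delannoyPaths (m + 1) n 0).ncard := by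
  rw [ncard_delannoyPaths_eq_sum_cons (by simp), sum_univ]
  simp [delannoyPaths, disp, isDiag, Prod.ext_iff, add_comm 1]

theorem ncard_delannoyPaths_succ_succ_succ :
    (delannoyPaths (m + 1) (n + 1) (r + 1)).ncard =
      (delannoyPaths m (n + 1) (r + 1)).ncard + (delannoyPaths (m + 1) n (r + 1)).ncard +
        2 * (delannoyPaths m n r).ncard := by
  rw [ncard_delannoyPaths_eq_sum_cons (by simp), sum_univ]
  simp [delannoyPaths, disp, isDiag, Prod.ext_iff, List.countP_cons, add_comm 1, two_mul,
    add_assoc]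

theorem twoColoredDelannoy_zero_zero : twoColoredDelannoy 0 0 r = if r = 0 then 1 else 0 := by
  cases r <;> simp [twoColoredDelannoy]

theorem twoColoredDelannoy_succ_zero :
    twoColoredDelannoy (m + 1) 0 r = twoColoredDelannoy m 0 r := by
  rcases r with _ | r
  · simp [twoColoredDelannoy]
  · have hlt : m + 1 - (r + 1) < m + 1 := by omega
    simp only [twoColoredDelannoy, Nat.choose_eq_zero_of_lt hlt]
    rcases le_or_gt (r + 1) m with h | h
    · simp [Nat.choose_eq_zero_of_lt (show m - (r + 1) < m by omega)]
    · simp [Nat.choose_eq_zero_of_lt h]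

theorem twoColoredDelannoy_zero_succ :
    twoColoredDelannoy 0 (n + 1) r = twoColoredDelannoy 0 n r := by
  cases r <;> simp [twoColoredDelannoy]

theorem twoColoredDelannoy_succ_succ_zero :
    twoColoredDelannoy (m + 1) (n + 1) 0 =
      twoColoredDelannoy m (n + 1) 0 + twoColoredDelannoy (m + 1) n 0 := by
  simp only [twoColoredDelannoy, pow_zero, Nat.sub_zero, Nat.choose_zero_right, one_mul, mul_one]
  rw [show m + 1 + (n + 1) = m + (n + 1) + 1 by omega, Nat.choose_succ_succ',
    show m + 1 + n = m + (n + 1) by omega]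

theorem twoColoredDelannoy_succ_succ_succ :
    twoColoredDelannoy (m + 1) (n + 1) (r + 1) =
      twoColoredDelannoy m (n + 1) (r + 1) + twoColoredDelannoy (m + 1) n (r + 1) +
        2 * twoColoredDelannoy m n r := by
  unfold twoColoredDelannoy
  rcases le_or_gt r (m + n) with h | h
  · generalize hL : m + n - r = L
    rw [show m + 1 + (n + 1) - (r + 1) = L + 1 by omega, show m + (n + 1) - (r + 1) = L by omega,
      show m + 1 + n - (r + 1) = L by omega, Nat.choose_succ_succ' L, Nat.choose_succ_succ' m]
    ring
  · simp [Nat.choose_eq_zero_of_lt (show m < r + 1 by omega),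
      Nat.choose_eq_zero_of_lt (show m < r by omega),
      Nat.choose_eq_zero_of_lt (show m + 1 < r + 1 by omega)]

end Recurrences

theorem ncard_delannoyPaths : ∀ m n r, (delannoyPaths m n r).ncard = twoColoredDelannoy m n r
  | 0, 0, r => by rw [ncard_delannoyPaths_zero_zero, twoColoredDelannoy_zero_zero]
  | m + 1, 0, r => by
    rw [ncard_delannoyPaths_succ_zero, ncard_delannoyPaths m 0 r, twoColoredDelannoy_succ_zero]
  | 0, n + 1, r => by
    rw [ncard_delannoyPaths_zero_succ, ncard_delannoyPaths 0 n r, twoColoredDelannoy_zero_succ]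
  | m + 1, n + 1, 0 => by
    rw [ncard_delannoyPaths_succ_succ_zero, ncard_delannoyPaths m (n + 1) 0,
      ncard_delannoyPaths (m + 1) n 0, twoColoredDelannoy_succ_succ_zero]
  | m + 1, n + 1, r + 1 => by
    rw [ncard_delannoyPaths_succ_succ_succ, ncard_delannoyPaths m (n + 1) (r + 1),
      ncard_delannoyPaths (m + 1) n (r + 1), ncard_delannoyPaths m n r,
      twoColoredDelannoy_succ_succ_succ]

theorem stmt13_general (m n r : ℕ) :
    {l : List DStep | (l.map DStep.disp).sum = (m, n) ∧ l.countP DStep.isDiag = r}.ncard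
      = 2 ^ r * (m + n - r).choose m * m.choose r :=
  ncard_delannoyPaths m n r

/-- The number of diagonally 2-colored Delannoy paths from `(0,0)` to `(m,n)` with exactly
`r` diagonal steps is `2^r · C(m+n-r, m) · C(m, r)`. -/
theorem stmt13 (m n r : ℕ) (hr : r ≤ min m n) :
    {l : List DStep | (l.map DStep.disp).sum = (m, n) ∧ l.countP DStep.isDiag = r}.ncard
      = 2 ^ r * (m + n - r).choose m * m.choose r :=
  stmt13_general m n r
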